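/- arXiv:2409.03675 — 6 statements merged into one kernel-verified Lean document; each statement's English description precedes it below -/
import Mathlib

section
/- For every integer k ≥ 0 and every h ≥ ⌊log₂ k⌋, there exist integers c₀, c₁, …, c_h ∈ {0,1,2} such that the set of all sums ∑_{i=0}^{h} 2^i · x_i, where each x_i ranges over the integers 0 ≤ x_i ≤ c_i, equals exactly {0, 1, …, k}. -/
lemma cover_aux : ∀ h : ℕ, ∀ k : ℕ, k < 2 ^ (h + 1) →
    ∃ c : ℕ → ℕ, (∀ i, c i ≤ 2) ∧ ∀ s : ℕ,
      (∃ x : ℕ → ℕ, (∀ i, x i ≤ c i) ∧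
        s = ∑ i ∈ Finset.range (h + 1), 2 ^ i * x i) ↔ s ≤ k := by
  intro h
  induction h with
  | zero =>
    intro k hk
    refine ⟨fun _ => k, fun _ => by show k ≤ 2; omega, fun s => ?_⟩
    simp only [zero_add, Finset.sum_range_one, pow_zero, one_mul]
    constructor
    · rintro ⟨x, hx, rfl⟩; exact hx 0
    · intro hs; exact ⟨fun _ => s, fun _ => hs, rfl⟩
  | succ h ih =>
    intro k hk
    rcases Nat.eq_zero_or_pos k with rfl | hk0
    · refine ⟨fun _ => 0, fun _ => Nat.zero_le _, fun s => ?_⟩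
      constructor
      · rintro ⟨x, hx, rfl⟩
        have hz : ∀ i ∈ Finset.range (h + 2), 2 ^ i * x i = 0 := by
          intro i _
          have hxi : x i = 0 := Nat.le_zero.mp (hx i)
          simp [hxi]
        simp [Finset.sum_congr rfl hz]
      · intro hs
        refine ⟨fun _ => 0, fun _ => le_refl _, ?_⟩
        simpa using Nat.le_zero.mp hs
    · obtain ⟨b, m, hb1, hb2, hkm⟩ : ∃ b m, 1 ≤ b ∧ b ≤ 2 ∧ k = 2 * m + b := by
        rcases Nat.even_or_odd k with ⟨t, ht⟩ | ⟨t, ht⟩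
        · exact ⟨2, t - 1, by omega, by omega, by omega⟩
        · exact ⟨1, t, by omega, by omega, by omega⟩
      have hpow : 2 ^ (h + 1 + 1) = 2 * 2 ^ (h + 1) := by ring
      have hmlt : m < 2 ^ (h + 1) := by omega
      obtain ⟨c', hc', hs'⟩ := ih m hmlt
      refine ⟨fun i => if i = 0 then b else c' (i - 1), ?_, fun s => ?_⟩
      · intro i
        by_cases hi : i = 0 <;> simp [hi]
        · omega
        · exact hc' _
      have hsum : ∀ x : ℕ → ℕ, ∑ i ∈ Finset.range (h + 2), 2 ^ i * x i
          = x 0 + 2 * ∑ i ∈ Finset.range (h + 1), 2 ^ i * x (i + 1) := by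
        intro x
        rw [Finset.sum_range_succ' (fun i => 2 ^ i * x i), pow_zero, one_mul,
          Finset.mul_sum, add_comm]
        congr 1
        refine Finset.sum_congr rfl fun i _ => ?_
        rw [pow_succ]
        ring
      constructor
      · rintro ⟨x, hx, rfl⟩
        have hT : (∑ i ∈ Finset.range (h + 1), 2 ^ i * x (i + 1)) ≤ m := by
          rw [← hs']
          refine ⟨fun i => x (i + 1), fun i => ?_, rfl⟩
          have := hx (i + 1)
          simpa using this
        have hx0 : x 0 ≤ b := by simpa using hx 0
        rw [hsum]
        omega
      · intro hs
        obtain ⟨x0, t, hx0b, htm, hst⟩ : ∃ x0 t, x0 ≤ b ∧ t ≤ m ∧ s = x0 + 2 * t := by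
          by_cases hc : s / 2 ≤ m
          · exact ⟨s % 2, s / 2, by omega, hc, by omega⟩
          · exact ⟨2, m, by omega, le_refl m, by omega⟩
        obtain ⟨y, hy, hty⟩ := (hs' t).mpr htm
        refine ⟨fun i => if i = 0 then x0 else y (i - 1), fun i => ?_, ?_⟩
        · by_cases hi : i = 0 <;> simp [hi]
          · exact hx0b
          · exact hy _
        · rw [hsum]
          have hco : ∀ i ∈ Finset.range (h + 1),
              2 ^ i * (if i + 1 = 0 then x0 else y (i + 1 - 1)) = 2 ^ i * y i := by
            intro i _; simp
          rw [Finset.sum_congr rfl hco, ← hty, hst]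
          simp

/-- Cover lemma: for every `k` and `h ≥ ⌊log₂ k⌋` there are digits
`c 0, …, c h ∈ {0,1,2}` such that the achievable sums `∑ 2^i * x i` with
`0 ≤ x i ≤ c i` are exactly `{0, 1, …, k}`. -/
theorem stmt_0 (k h : ℕ) (hh : Nat.log 2 k ≤ h) :
    ∃ c : Fin (h + 1) → ℕ, (∀ i, c i ≤ 2) ∧
      {s : ℕ | ∃ x : Fin (h + 1) → ℕ, (∀ i, x i ≤ c i) ∧
        s = ∑ i : Fin (h + 1), 2 ^ (i : ℕ) * x i} = Set.Iic k := by
  have hk : k < 2 ^ (h + 1) := by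
    calc k < 2 ^ (Nat.log 2 k + 1) := Nat.lt_pow_succ_log_self (by norm_num) k
    _ ≤ 2 ^ (h + 1) := Nat.pow_le_pow_right (by norm_num) (by omega)
  obtain ⟨c, hc, hiff⟩ := cover_aux h k hk
  refine ⟨fun i => c i, fun i => hc i, ?_⟩
  ext s
  simp only [Set.mem_setOf_eq, Set.mem_Iic]
  rw [← hiff s]
  constructor
  · rintro ⟨x, hx, rfl⟩
    refine ⟨fun i => if hi : i < h + 1 then x ⟨i, hi⟩ else 0, fun i => ?_, ?_⟩
    · by_cases hi : i < h + 1 <;> simp [hi]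
      exact hx _
    · rw [← Fin.sum_univ_eq_sum_range (fun i => 2 ^ i * if hi : i < h + 1 then x ⟨i, hi⟩ else 0)]
      apply Finset.sum_congr rfl
      intro i _
      simp [i.isLt]
  · rintro ⟨x, hx, rfl⟩
    refine ⟨fun i => x i, fun i => hx i, ?_⟩
    exact (Fin.sum_univ_eq_sum_range (fun i => 2 ^ i * x i) (h + 1)).symm
end

section
/- Let k ≥ 1, let B = 2^h − 1 for some h ≥ ⌊log₂ k⌋ with B ≤ k, and let T = k − B. Define S_B = {∑_{i<h} 2^i x_i : 0 ≤ x_i ≤ bin_i(B)} and S_T = {∑_{i≤h} 2^i x_i : 0 ≤ x_i ≤ bin_i(T)}, where bin_i(n) denotes the i-th bit of n. Then the sumset S_B ⊕ S_T = {b + t : b ∈ S_B, t ∈ S_T} equals {0, 1, …, k}. -/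
lemma sum_testBit_eq (n : ℕ) : ∀ m : ℕ, m < 2^n →
    ∑ i ∈ Finset.range n, 2^i * (m.testBit i).toNat = m := by
  induction n with
  | zero => intro m h; interval_cases m; simp
  | succ n ih =>
    intro m h
    rw [Finset.sum_range_succ']
    have h1 : m / 2 < 2 ^ n := by rw [pow_succ] at h; omega
    have h2 := ih (m / 2) h1
    simp only [Nat.testBit_succ, pow_succ, pow_zero, one_mul, Nat.testBit_zero]
    have h3 : ∑ i ∈ Finset.range n, 2 ^ i * 2 * ((m / 2).testBit i).toNat
        = 2 * ∑ i ∈ Finset.range n, 2 ^ i * ((m / 2).testBit i).toNat := by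
      rw [Finset.mul_sum]; exact Finset.sum_congr rfl fun i _ => by ring
    rw [h3, h2]
    rcases Nat.mod_two_eq_zero_or_one m with hm | hm <;> simp [hm] <;> omega

lemma sum_le_of_bit_bounds (n m : ℕ) (hm : m < 2^n) (x : Fin n → ℕ)
    (hx : ∀ i, x i ≤ (m.testBit (i : ℕ)).toNat) :
    ∑ i : Fin n, 2 ^ (i : ℕ) * x i ≤ m := by
  calc ∑ i : Fin n, 2 ^ (i : ℕ) * x i
      ≤ ∑ i : Fin n, 2 ^ (i : ℕ) * (m.testBit (i : ℕ)).toNat :=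
        Finset.sum_le_sum fun i _ => Nat.mul_le_mul_left _ (hx i)
    _ = ∑ i ∈ Finset.range n, 2 ^ i * (m.testBit i).toNat :=
        Fin.sum_univ_eq_sum_range (fun i => 2^i * (m.testBit i).toNat) n
    _ = m := sum_testBit_eq n m hm

/-- Greedy cover lemma: any `s ≤ 2^h - 1 + T` splits as a submask `t` of `T`
plus a remainder at most `2^h - 1`. -/
lemma cover (h : ℕ) : ∀ T : ℕ, T < 2^(h+1) → ∀ s, s ≤ 2^h - 1 + T →
    ∃ t, (∀ i, t.testBit i = true → T.testBit i = true) ∧ t ≤ T ∧ t ≤ s ∧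
      s - t ≤ 2^h - 1 := by
  intro T
  induction T using Nat.strong_induction_on with
  | _ T IH =>
    intro hT s hs
    rcases Nat.eq_zero_or_pos T with h0 | h0
    · exact ⟨0, by simp, Nat.zero_le _, Nat.zero_le _, by omega⟩
    · set j := Nat.log 2 T with hj
      have h2j : 2^j ≤ T := Nat.pow_log_le_self 2 h0.ne'
      have hTj : T < 2^(j+1) := Nat.lt_pow_succ_log_self one_lt_two T
      have hjj : (2:ℕ)^(j+1) = 2 * 2^j := by ring
      set T' := T - 2^j with hT'
      have hT'lt : T' < 2^j := by omega
      have hTsum : T = 2^j + T' := by omega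
      have h2jpos : 0 < (2:ℕ)^j := Nat.pow_pos (by norm_num)
      have hjh : j ≤ h := by
        by_contra hc
        push_neg at hc
        have : (2:ℕ)^(h+1) ≤ 2^j := Nat.pow_le_pow_right (by norm_num) hc
        omega
      have h2jh : (2:ℕ)^j ≤ 2^h := Nat.pow_le_pow_right (by norm_num) hjh
      have hsub : ∀ i, T'.testBit i = true → T.testBit i = true := by
        intro i hi
        rcases lt_trichotomy i j with hij | hij | hij
        · rw [hTsum, Nat.testBit_two_pow_add_gt hij]; exact hi
        · subst hij
          exact absurd hi (by simp [Nat.testBit_lt_two_pow hT'lt])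
        · have : T' < 2^i := lt_of_lt_of_le hT'lt
            (Nat.pow_le_pow_right (by norm_num) hij.le)
          exact absurd hi (by simp [Nat.testBit_lt_two_pow this])
      by_cases hcase : s ≤ 2^h - 1 + T'
      · obtain ⟨t, ht1, ht2, ht3, ht4⟩ := IH T' (by omega) (by omega) s hcase
        exact ⟨t, fun i hi => hsub i (ht1 i hi), by omega, ht3, ht4⟩
      · push_neg at hcase
        have hs2 : s - 2^j ≤ 2^h - 1 + T' := by omega
        have hsj : 2^j ≤ s := by omega
        obtain ⟨t', ht1, ht2, ht3, ht4⟩ := IH T' (by omega) (by omega) (s - 2^j) hs2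
        have ht'lt : t' < 2^j := by omega
        refine ⟨2^j + t', ?_, by omega, by omega, by omega⟩
        intro i hi
        rcases lt_trichotomy i j with hij | hij | hij
        · rw [Nat.testBit_two_pow_add_gt hij] at hi
          exact hsub i (ht1 i hi)
        · subst hij
          rw [hTsum, Nat.testBit_two_pow_add_eq,
            Nat.testBit_lt_two_pow hT'lt]
          rfl
        · have hlt : 2^j + t' < 2^i := by
            have : (2:ℕ)^(j+1) ≤ 2^i := Nat.pow_le_pow_right (by norm_num) hij
            omega
          exact absurd hi (by simp [Nat.testBit_lt_two_pow hlt])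

/-- The bottom/top bit construction: with `B = 2^h - 1 ≤ k`, `T = k - B`,
the sumset of `S_B` (sums with digit bounds the bits of `B`, over `i < h`)
and `S_T` (sums with digit bounds the bits of `T`, over `i ≤ h`) equals
`{0, 1, …, k}`. -/
theorem stmt_1 (k h : ℕ) (hk : 1 ≤ k) (hh : Nat.log 2 k ≤ h)
    (hBk : 2 ^ h - 1 ≤ k) :
    {s : ℕ |
      ∃ b ∈ {u : ℕ | ∃ x : Fin h → ℕ,
          (∀ i, x i ≤ ((2 ^ h - 1).testBit (i : ℕ)).toNat) ∧
          u = ∑ i : Fin h, 2 ^ (i : ℕ) * x i},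
      ∃ t ∈ {u : ℕ | ∃ x : Fin (h + 1) → ℕ,
          (∀ i, x i ≤ ((k - (2 ^ h - 1)).testBit (i : ℕ)).toNat) ∧
          u = ∑ i : Fin (h + 1), 2 ^ (i : ℕ) * x i},
      s = b + t} = Set.Iic k := by
  have hkpow : k < 2^(h+1) := by
    calc k < 2^(Nat.log 2 k + 1) := Nat.lt_pow_succ_log_self one_lt_two k
    _ ≤ 2^(h+1) := Nat.pow_le_pow_right (by norm_num) (by omega)
  have hBlt : (2:ℕ)^h - 1 < 2^h := by
    have : 0 < (2:ℕ)^h := Nat.pow_pos (by norm_num)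
    omega
  have hTlt : k - (2^h - 1) < 2^(h+1) := by omega
  ext s
  simp only [Set.mem_setOf_eq, Set.mem_Iic]
  constructor
  · rintro ⟨b, ⟨xb, hxb, rfl⟩, t, ⟨xt, hxt, rfl⟩, rfl⟩
    have hb := sum_le_of_bit_bounds h (2^h - 1) hBlt xb hxb
    have ht := sum_le_of_bit_bounds (h+1) (k - (2^h - 1)) hTlt xt hxt
    omega
  · intro hs
    obtain ⟨t, ht1, ht2, ht3, ht4⟩ := cover h (k - (2^h - 1)) hTlt s (by omega)
    set b := s - t with hb
    have hblt : b < 2^h := by omega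
    refine ⟨b, ⟨fun i => (b.testBit (i : ℕ)).toNat, ?_, ?_⟩,
      t, ⟨fun i => (t.testBit (i : ℕ)).toNat, ?_, ?_⟩, by omega⟩
    · intro i
      rw [Nat.testBit_two_pow_sub_one]
      have : (i : ℕ) < h := i.isLt
      simp [this, Bool.toNat_le]
    · rw [Fin.sum_univ_eq_sum_range (fun i => 2^i * (b.testBit i).toNat) h,
        sum_testBit_eq h b hblt]
    · intro i
      cases hc : t.testBit (i : ℕ) with
      | false => simp [hc]
      | true => simp [hc, ht1 (i : ℕ) hc]
    · have htlt : t < 2^(h+1) := by omega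
      rw [Fin.sum_univ_eq_sum_range (fun i => 2^i * (t.testBit i).toNat) (h+1),
        sum_testBit_eq (h+1) t htlt]
end

section
/- Suppose B, B̄ ∈ {0,1}^{(2k−1)×N} are such that Bz + B̄z̄ = 0 with z, z̄ ∈ {−1,1}^N has exactly the two constant solutions (z, z̄) = (1, −1) and (z, z̄) = (−1, 1). Define B' and B̄' ∈ {0,1}^{(2k+1)×2N} by B' = [[B, 0],[1⋯1, 0⋯0],[0⋯0, 1⋯1]] and B̄' = [[B̄, 0],[0⋯0, 1⋯1],[1⋯1, 0⋯0]]. Then B'w + B̄'w̄ = 0 with w, w̄ ∈ {−1,1}^{2N} has exactly the two constant solutions (w, w̄) = (1, −1) and (w, w̄) = (−1, 1). -/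
lemma sum_pm_eq_card {N : ℕ} (v : Fin N → ℤ) (hv : ∀ i, v i = 1 ∨ v i = -1)
    (h : ∑ i, v i = N) : ∀ i, v i = 1 := by
  have h0 : ∑ i : Fin N, (1 - v i) = 0 := by
    rw [Finset.sum_sub_distrib, h]; simp
  have := (Finset.sum_eq_zero_iff_of_nonneg (fun i _ => by
    rcases hv i with h | h <;> simp [h])).mp h0
  intro i
  have := this i (Finset.mem_univ i)
  linarith

lemma sum_pm_eq_neg_card {N : ℕ} (v : Fin N → ℤ) (hv : ∀ i, v i = 1 ∨ v i = -1)
    (h : ∑ i, v i = -N) : ∀ i, v i = -1 := by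
  have hsum : ∑ i : Fin N, -v i = (N : ℤ) := by rw [Finset.sum_neg_distrib, h]; ring
  have := sum_pm_eq_card (fun i => -v i) (fun i => by rcases hv i with h|h <;> simp [h]) hsum
  intro i; have h2 := this i; linarith

/-- Inductive step of the discrepancy gadget construction: extending the
matrices `B, B̄` (whose only `±1` solutions of `B z + B̄ z̄ = 0` are the two
constant ones) by two rows yields matrices `B', B̄'` on twice as many columns
with the same property. Rows are indexed by `Fin (2k-1) ⊕ Fin 2` and columns
by `Fin N ⊕ Fin N`. -/
theorem stmt_4 (k N : ℕ)
    (B Bbar : Matrix (Fin (2 * k - 1)) (Fin N) ℤ)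
    (hB : ∀ i j, B i j = 0 ∨ B i j = 1)
    (hBbar : ∀ i j, Bbar i j = 0 ∨ Bbar i j = 1)
    (hsol : {p : (Fin N → ℤ) × (Fin N → ℤ) |
        (∀ i, p.1 i = 1 ∨ p.1 i = -1) ∧ (∀ i, p.2 i = 1 ∨ p.2 i = -1) ∧
        B.mulVec p.1 + Bbar.mulVec p.2 = 0} =
      {((fun _ => 1), (fun _ => -1)), ((fun _ => -1), (fun _ => 1))})
    (B' Bbar' : Matrix (Fin (2 * k - 1) ⊕ Fin 2) (Fin N ⊕ Fin N) ℤ)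
    (hB' : ∀ r c, B' r c =
      match r, c with
      | Sum.inl i, Sum.inl j => B i j
      | Sum.inl _, Sum.inr _ => 0
      | Sum.inr 0, Sum.inl _ => 1
      | Sum.inr 0, Sum.inr _ => 0
      | Sum.inr 1, Sum.inl _ => 0
      | Sum.inr 1, Sum.inr _ => 1)
    (hBbar' : ∀ r c, Bbar' r c =
      match r, c with
      | Sum.inl i, Sum.inl j => Bbar i j
      | Sum.inl _, Sum.inr _ => 0
      | Sum.inr 0, Sum.inl _ => 0
      | Sum.inr 0, Sum.inr _ => 1
      | Sum.inr 1, Sum.inl _ => 1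
      | Sum.inr 1, Sum.inr _ => 0) :
    {p : (Fin N ⊕ Fin N → ℤ) × (Fin N ⊕ Fin N → ℤ) |
        (∀ i, p.1 i = 1 ∨ p.1 i = -1) ∧ (∀ i, p.2 i = 1 ∨ p.2 i = -1) ∧
        B'.mulVec p.1 + Bbar'.mulVec p.2 = 0} =
      {((fun _ => 1), (fun _ => -1)), ((fun _ => -1), (fun _ => 1))} := by
  ext p
  simp only [Set.mem_setOf_eq, Set.mem_insert_iff, Set.mem_singleton_iff]
  constructor
  · rintro ⟨h1, h2, h3⟩
    have h3' : ∀ r, B'.mulVec p.1 r + Bbar'.mulVec p.2 r = 0 := fun r => congrFun h3 r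
    have hleft : B.mulVec (fun j => p.1 (Sum.inl j)) + Bbar.mulVec (fun j => p.2 (Sum.inl j)) = 0 := by
      funext i
      have := h3' (Sum.inl i)
      simpa [Matrix.mulVec, dotProduct, Fintype.sum_sum_type, hB', hBbar'] using this
    have hmem : ((fun j => p.1 (Sum.inl j)), (fun j => p.2 (Sum.inl j))) ∈
        {p : (Fin N → ℤ) × (Fin N → ℤ) |
          (∀ i, p.1 i = 1 ∨ p.1 i = -1) ∧ (∀ i, p.2 i = 1 ∨ p.2 i = -1) ∧
          B.mulVec p.1 + Bbar.mulVec p.2 = 0} :=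
      ⟨fun i => h1 _, fun i => h2 _, hleft⟩
    rw [hsol] at hmem
    have hrow0 := h3' (Sum.inr 0)
    have hrow1 := h3' (Sum.inr 1)
    simp only [Matrix.mulVec, dotProduct, Fintype.sum_sum_type, hB', hBbar',
      one_mul, zero_mul, Finset.sum_const_zero, add_zero, zero_add, Pi.add_apply] at hrow0 hrow1
    rcases hmem with hm | hm
    · left
      have e1 : ∀ j, p.1 (Sum.inl j) = 1 := fun j => congrFun (congrArg Prod.fst hm) j
      have e2 : ∀ j, p.2 (Sum.inl j) = -1 := fun j => congrFun (congrArg Prod.snd hm) j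
      have s1 : ∑ j : Fin N, p.1 (Sum.inl j) = (N : ℤ) := by simp [e1]
      have s2 : ∑ j : Fin N, p.2 (Sum.inl j) = -(N : ℤ) := by simp [e2]
      have e3 : ∀ j, p.2 (Sum.inr j) = -1 := by
        apply sum_pm_eq_neg_card _ (fun j => h2 _)
        linarith [hrow0, s1]
      have e4 : ∀ j, p.1 (Sum.inr j) = 1 := by
        apply sum_pm_eq_card _ (fun j => h1 _)
        linarith [hrow1, s2]
      refine Prod.ext ?_ ?_ <;> funext c <;> rcases c with j | j <;>
        simp [e1, e2, e3, e4]
    · right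
      have e1 : ∀ j, p.1 (Sum.inl j) = -1 := fun j => congrFun (congrArg Prod.fst hm) j
      have e2 : ∀ j, p.2 (Sum.inl j) = 1 := fun j => congrFun (congrArg Prod.snd hm) j
      have s1 : ∑ j : Fin N, p.1 (Sum.inl j) = -(N : ℤ) := by simp [e1]
      have s2 : ∑ j : Fin N, p.2 (Sum.inl j) = (N : ℤ) := by simp [e2]
      have e3 : ∀ j, p.2 (Sum.inr j) = 1 := by
        apply sum_pm_eq_card _ (fun j => h2 _)
        linarith [hrow0, s1]
      have e4 : ∀ j, p.1 (Sum.inr j) = -1 := by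
        apply sum_pm_eq_neg_card _ (fun j => h1 _)
        linarith [hrow1, s2]
      refine Prod.ext ?_ ?_ <;> funext c <;> rcases c with j | j <;>
        simp [e1, e2, e3, e4]
  · have hc : ∀ q ∈ ({((fun _ => 1), (fun _ => -1)), ((fun _ => -1), (fun _ => 1))} :
        Set ((Fin N → ℤ) × (Fin N → ℤ))), B.mulVec q.1 + Bbar.mulVec q.2 = 0 := by
      intro q hq
      rw [← hsol] at hq
      exact hq.2.2
    have hc1 := hc _ (Set.mem_insert _ _)
    have hc2 := hc _ (Set.mem_insert_of_mem _ rfl)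
    rintro (hm | hm) <;> subst hm <;>
      refine ⟨fun i => by rcases i with i|i <;> simp, fun i => by rcases i with i|i <;> simp, ?_⟩ <;>
      funext r <;> rcases r with i | i
    · have := congrFun hc1 i
      simpa [Matrix.mulVec, dotProduct, Fintype.sum_sum_type, hB', hBbar'] using this
    · fin_cases i <;>
        simp [Matrix.mulVec, dotProduct, Fintype.sum_sum_type, hB', hBbar']
    · have := congrFun hc2 i
      simpa [Matrix.mulVec, dotProduct, Fintype.sum_sum_type, hB', hBbar'] using this
    · fin_cases i <;>
        simp [Matrix.mulVec, dotProduct, Fintype.sum_sum_type, hB', hBbar']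
end

section
/- Let s₁, …, s_M ∈ {0,1}^{2n} be strings, let d₁, …, d_M ∈ {0,…,2n}, and define r₁ = 0^{6n}, r₂ = 1^{4n} 0^{2n}, and s'_j = s_j · 1^n · 0^n · 1^{2n−d_j} · 0^{d_j}. If t ∈ {0,1}^{2n} has exactly n ones and satisfies d(t, s_j) ≤ d_j for all j, then the string t' = t · 1^n · 0^{3n} has Hamming distance at most 2n to r₁, r₂, and every s'_j. -/
open Finset

private def Ffun (n : ℕ) (t : Fin (2*n) → Bool) : ℕ → Bool :=
  fun k => if h : k < 2*n then t ⟨k, h⟩ else if k < 3*n then true else false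

private def Gfun (n : ℕ) (dj : ℕ) (sj : Fin (2*n) → Bool) : ℕ → Bool :=
  fun k => if h : k < 2*n then sj ⟨k, h⟩ else if k < 3*n then true
    else if k < 4*n then false else if k < 6*n - dj then true else false

private lemma ham_as_sum (N : ℕ) (f g : ℕ → Bool) :
    hammingDist (fun i : Fin N => f i) (fun i : Fin N => g i)
      = ∑ k ∈ Finset.range N, if f k ≠ g k then 1 else 0 := by
  rw [hammingDist, Finset.card_filter, ← Fin.sum_univ_eq_sum_range]

private lemma sum_seg (a b : ℕ) (f : ℕ → ℕ) (c : ℕ)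
    (h : ∀ k, a ≤ k → k < b → f k = c) :
    ∑ k ∈ Finset.Ico a b, f k = (b - a) * c := by
  rw [Finset.sum_congr rfl
    (fun k hk => h k (Finset.mem_Ico.mp hk).1 (Finset.mem_Ico.mp hk).2),
    Finset.sum_const, Nat.card_Ico, smul_eq_mul]

/-- Completeness of the Closest String reduction: if `t ∈ {0,1}^{2n}` has
exactly `n` ones and `d(t, s_j) ≤ d_j` for all `j`, then
`t' = t · 1^n · 0^{3n}` is within Hamming distance `2n` of `r₁ = 0^{6n}`,
`r₂ = 1^{4n}0^{2n}`, and every `s'_j = s_j · 1^n · 0^n · 1^{2n-d_j} · 0^{d_j}`. -/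
theorem stmt_7 (n M : ℕ) (s : Fin M → Fin (2 * n) → Bool)
    (d : Fin M → ℕ) (hd : ∀ j, d j ≤ 2 * n)
    (t : Fin (2 * n) → Bool)
    (hones : (Finset.univ.filter fun i => t i = true).card = n)
    (hclose : ∀ j, hammingDist t (s j) ≤ d j) :
    (hammingDist (fun p : Fin (6 * n) =>
        if h : (p : ℕ) < 2 * n then t ⟨p, h⟩
        else if (p : ℕ) < 3 * n then true else false)
      (fun _ => false) ≤ 2 * n) ∧
    (hammingDist (fun p : Fin (6 * n) =>
        if h : (p : ℕ) < 2 * n then t ⟨p, h⟩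
        else if (p : ℕ) < 3 * n then true else false)
      (fun p => decide ((p : ℕ) < 4 * n)) ≤ 2 * n) ∧
    (∀ j, hammingDist (fun p : Fin (6 * n) =>
        if h : (p : ℕ) < 2 * n then t ⟨p, h⟩
        else if (p : ℕ) < 3 * n then true else false)
      (fun p => if h : (p : ℕ) < 2 * n then s j ⟨p, h⟩
        else if (p : ℕ) < 3 * n then true
        else if (p : ℕ) < 4 * n then false
        else if (p : ℕ) < 6 * n - d j then true
        else false) ≤ 2 * n) := by
  set F := Ffun n t with hFdef
  -- count of ones in t, as a range sum
  have hones' : ∑ k ∈ Finset.range (2*n), (if F k = true then 1 else 0) = n := by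
    calc ∑ k ∈ Finset.range (2*n), (if F k = true then (1:ℕ) else 0)
        = ∑ i : Fin (2*n), (if t i = true then (1:ℕ) else 0) := by
          rw [← Fin.sum_univ_eq_sum_range (fun k => if F k = true then (1:ℕ) else 0) (2*n)]
          refine Finset.sum_congr rfl fun i _ => ?_
          simp [hFdef, Ffun, i.isLt]
      _ = (Finset.univ.filter fun i => t i = true).card :=
          (Finset.card_filter _ _).symm
      _ = n := hones
  have htot : ∑ k ∈ Finset.range (2*n),
      ((if F k = true then 1 else 0) + (if F k = false then 1 else 0)) = 2*n := by
    have step : ∀ k ∈ Finset.range (2*n),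
        ((if F k = true then 1 else 0) + (if F k = false then 1 else 0)) = (1 : ℕ) := by
      intro k _; cases h : F k <;> simp
    rw [Finset.sum_congr rfl step, Finset.sum_const, Finset.card_range,
      smul_eq_mul, mul_one]
  have hzeros : ∑ k ∈ Finset.range (2*n), (if F k = false then 1 else 0) = n := by
    rw [Finset.sum_add_distrib, hones'] at htot
    omega
  refine ⟨?_, ?_, ?_⟩
  · -- distance to r₁ = 0^{6n}
    have e : hammingDist (fun p : Fin (6 * n) =>
        if h : (p : ℕ) < 2 * n then t ⟨p, h⟩
        else if (p : ℕ) < 3 * n then true else false)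
        (fun _ : Fin (6*n) => false)
        = ∑ k ∈ Finset.range (6*n), if F k ≠ false then 1 else 0 :=
      ham_as_sum (6*n) F (fun _ => false)
    rw [e, Finset.range_eq_Ico,
      ← Finset.sum_Ico_consecutive _ (Nat.zero_le (2*n)) (by omega : 2*n ≤ 6*n),
      ← Finset.sum_Ico_consecutive _ (by omega : 2*n ≤ 3*n) (by omega : 3*n ≤ 6*n)]
    have s1 : ∑ k ∈ Finset.Ico 0 (2*n), (if F k ≠ false then 1 else 0) = n := by
      rw [← Finset.range_eq_Ico]
      calc ∑ k ∈ Finset.range (2*n), (if F k ≠ false then 1 else 0)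
          = ∑ k ∈ Finset.range (2*n), (if F k = true then 1 else 0) :=
            Finset.sum_congr rfl fun k _ => by cases h : F k <;> simp
        _ = n := hones' 
    have s2 : ∑ k ∈ Finset.Ico (2*n) (3*n), (if F k ≠ false then 1 else 0)
        = (3*n - 2*n) * 1 :=
      sum_seg _ _ _ _ fun k hk1 hk2 => by
        simp [hFdef, Ffun, Nat.not_lt.mpr hk1, hk2]
    have s3 : ∑ k ∈ Finset.Ico (3*n) (6*n), (if F k ≠ false then 1 else 0)
        = (6*n - 3*n) * 0 :=
      sum_seg _ _ _ _ fun k hk1 hk2 => by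
        have h2 : ¬ k < 2*n := by omega
        have h3 : ¬ k < 3*n := by omega
        simp [hFdef, Ffun, h2, h3]
    rw [s1, s2, s3]; omega
  · -- distance to r₂ = 1^{4n}0^{2n}
    have e : hammingDist (fun p : Fin (6 * n) =>
        if h : (p : ℕ) < 2 * n then t ⟨p, h⟩
        else if (p : ℕ) < 3 * n then true else false)
        (fun p : Fin (6*n) => decide ((p : ℕ) < 4 * n))
        = ∑ k ∈ Finset.range (6*n), if F k ≠ decide (k < 4*n) then 1 else 0 :=
      ham_as_sum (6*n) F (fun k => decide (k < 4*n))
    rw [e, Finset.range_eq_Ico,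
      ← Finset.sum_Ico_consecutive _ (Nat.zero_le (2*n)) (by omega : 2*n ≤ 6*n),
      ← Finset.sum_Ico_consecutive _ (by omega : 2*n ≤ 3*n) (by omega : 3*n ≤ 6*n),
      ← Finset.sum_Ico_consecutive _ (by omega : 3*n ≤ 4*n) (by omega : 4*n ≤ 6*n)]
    have s1 : ∑ k ∈ Finset.Ico 0 (2*n), (if F k ≠ decide (k < 4*n) then 1 else 0)
        = n := by
      rw [← Finset.range_eq_Ico]
      calc ∑ k ∈ Finset.range (2*n), (if F k ≠ decide (k < 4*n) then 1 else 0)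
          = ∑ k ∈ Finset.range (2*n), (if F k = false then 1 else 0) := by
            refine Finset.sum_congr rfl fun k hk => ?_
            have hk2 : k < 2*n := Finset.mem_range.mp hk
            have hk4 : k < 4*n := by omega
            cases h : F k <;> simp [hk4]
        _ = n := hzeros
    have s2 : ∑ k ∈ Finset.Ico (2*n) (3*n), (if F k ≠ decide (k < 4*n) then 1 else 0)
        = (3*n - 2*n) * 0 :=
      sum_seg _ _ _ _ fun k hk1 hk2 => by
        have h4 : k < 4*n := by omega
        simp [hFdef, Ffun, Nat.not_lt.mpr hk1, hk2, h4]
    have s3 : ∑ k ∈ Finset.Ico (3*n) (4*n), (if F k ≠ decide (k < 4*n) then 1 else 0)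
        = (4*n - 3*n) * 1 :=
      sum_seg _ _ _ _ fun k hk1 hk2 => by
        have h2 : ¬ k < 2*n := by omega
        have h3 : ¬ k < 3*n := by omega
        simp [hFdef, Ffun, h2, h3, hk2]
    have s4 : ∑ k ∈ Finset.Ico (4*n) (6*n), (if F k ≠ decide (k < 4*n) then 1 else 0)
        = (6*n - 4*n) * 0 :=
      sum_seg _ _ _ _ fun k hk1 hk2 => by
        have h2 : ¬ k < 2*n := by omega
        have h3 : ¬ k < 3*n := by omega
        have h4 : ¬ k < 4*n := by omega
        simp [hFdef, Ffun, h2, h3, h4]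
    rw [s1, s2, s3, s4]; omega
  · -- distances to s'_j
    intro j
    set G := Gfun n (d j) (s j) with hGdef
    have e : hammingDist (fun p : Fin (6 * n) =>
        if h : (p : ℕ) < 2 * n then t ⟨p, h⟩
        else if (p : ℕ) < 3 * n then true else false)
        (fun p : Fin (6*n) => if h : (p : ℕ) < 2 * n then s j ⟨p, h⟩
          else if (p : ℕ) < 3 * n then true
          else if (p : ℕ) < 4 * n then false
          else if (p : ℕ) < 6 * n - d j then true
          else false)
        = ∑ k ∈ Finset.range (6*n), if F k ≠ G k then 1 else 0 :=
      ham_as_sum (6*n) F G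
    rw [e, Finset.range_eq_Ico,
      ← Finset.sum_Ico_consecutive _ (Nat.zero_le (2*n)) (by omega : 2*n ≤ 6*n),
      ← Finset.sum_Ico_consecutive _ (by omega : 2*n ≤ 4*n) (by omega : 4*n ≤ 6*n),
      ← Finset.sum_Ico_consecutive _ (by have := hd j; omega : 4*n ≤ 6*n - d j)
        (by omega : 6*n - d j ≤ 6*n)]
    have hdj := hd j
    have s1 : ∑ k ∈ Finset.Ico 0 (2*n), (if F k ≠ G k then 1 else 0) ≤ d j := by
      rw [← Finset.range_eq_Ico]
      refine le_trans (le_of_eq ?_) (hclose j)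
      rw [hammingDist, Finset.card_filter, ← Fin.sum_univ_eq_sum_range
        (fun k => if F k ≠ G k then 1 else 0) (2*n)]
      refine Finset.sum_congr rfl fun i _ => ?_
      simp [hFdef, hGdef, Ffun, Gfun, i.isLt]
    have s2 : ∑ k ∈ Finset.Ico (2*n) (4*n), (if F k ≠ G k then 1 else 0)
        = (4*n - 2*n) * 0 :=
      sum_seg _ _ _ _ fun k hk1 hk2 => by
        have h2 : ¬ k < 2*n := by omega
        simp only [hFdef, hGdef, Ffun, Gfun, dif_neg h2]
        by_cases h3 : k < 3*n <;> simp [h3, hk2]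
    have s3 : ∑ k ∈ Finset.Ico (4*n) (6*n - d j), (if F k ≠ G k then 1 else 0)
        = (6*n - d j - 4*n) * 1 :=
      sum_seg _ _ _ _ fun k hk1 hk2 => by
        have h2 : ¬ k < 2*n := by omega
        have h3 : ¬ k < 3*n := by omega
        have h4 : ¬ k < 4*n := by omega
        simp [hFdef, hGdef, Ffun, Gfun, h2, h3, h4, hk2]
    have s4 : ∑ k ∈ Finset.Ico (6*n - d j) (6*n), (if F k ≠ G k then 1 else 0)
        = (6*n - (6*n - d j)) * 0 :=
      sum_seg _ _ _ _ fun k hk1 hk2 => by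
        have h2 : ¬ k < 2*n := by omega
        have h3 : ¬ k < 3*n := by omega
        have h4 : ¬ k < 4*n := by omega
        have h5 : ¬ k < 6*n - d j := by omega
        simp [hFdef, hGdef, Ffun, Gfun, h2, h3, h4, h5]
    rw [s2, s3, s4]
    refine le_trans (Nat.add_le_add_right s1 _) ?_
    omega
end

section
/- Let A ∈ ℤ^{m×n} with all entries of absolute value at most Δ, and let b ∈ ℤ^m. Suppose y = 2⁰y⁽⁰⁾ + 2¹y⁽¹⁾ + ⋯ + 2^h y⁽ʰ⁾ satisfies Ay = b, where 0 ≤ y⁽ʲ⁾ ≤ u⁽ʲ⁾ componentwise with u⁽ʲ⁾ ∈ {0,1,2}^n for each j. Then for every j ∈ {0,…,h}, the partial sum b⁽≤ʲ⁾ := ∑_{i=0}^{j} 2^i A y⁽ⁱ⁾ satisfies b⁽≤ʲ⁾ ≡ b (mod 2^{j+1}) componentwise, and ‖b⁽≤ʲ⁾‖_∞ ≤ 2^{j+2} · m · n · Δ. -/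
lemma geom_two_le (t : ℕ) : ∑ i ∈ Finset.range t, (2 : ℤ) ^ i ≤ 2 ^ t := by
  induction t with
  | zero => simp
  | succ t ih =>
      rw [Finset.sum_range_succ, pow_succ]
      linarith

/-- Bounds on partial right-hand sides: if `y = ∑ 2^i y⁽ⁱ⁾` solves `Ay = b`
with `0 ≤ y⁽ⁱ⁾ ≤ u⁽ⁱ⁾` and `u⁽ⁱ⁾ ∈ {0,1,2}^n`, then each partial sum
`b⁽≤ʲ⁾ = ∑_{i≤j} 2^i A y⁽ⁱ⁾` is congruent to `b` mod `2^{j+1}` componentwise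
and has `∞`-norm at most `2^{j+2}·m·n·Δ`. -/
theorem stmt_10 (m n h : ℕ) (Δ : ℕ)
    (A : Matrix (Fin m) (Fin n) ℤ) (hA : ∀ i j, |A i j| ≤ (Δ : ℤ))
    (b : Fin m → ℤ) (y : Fin (h + 1) → Fin n → ℤ)
    (u : Fin (h + 1) → Fin n → ℤ)
    (hu : ∀ i k, u i k = 0 ∨ u i k = 1 ∨ u i k = 2)
    (hy : ∀ i k, 0 ≤ y i k ∧ y i k ≤ u i k)
    (hAy : A.mulVec (∑ i : Fin (h + 1), (2 : ℤ) ^ (i : ℕ) • y i) = b) :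
    ∀ j : Fin (h + 1), ∀ r : Fin m,
      (∑ i ∈ Finset.univ.filter (fun i : Fin (h + 1) => (i : ℕ) ≤ (j : ℕ)),
          (2 : ℤ) ^ (i : ℕ) * A.mulVec (y i) r) ≡ b r [ZMOD 2 ^ ((j : ℕ) + 1)] ∧
      |∑ i ∈ Finset.univ.filter (fun i : Fin (h + 1) => (i : ℕ) ≤ (j : ℕ)),
          (2 : ℤ) ^ (i : ℕ) * A.mulVec (y i) r| ≤
        2 ^ ((j : ℕ) + 2) * m * n * Δ := by
  intro j r
  -- rewrite b r as full sum
  have hb : b r = ∑ i : Fin (h + 1), (2 : ℤ) ^ (i : ℕ) * A.mulVec (y i) r := by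
    rw [← hAy]
    simp only [Matrix.mulVec, dotProduct, Finset.sum_apply, Pi.smul_apply,
      smul_eq_mul, Finset.mul_sum]
    rw [Finset.sum_comm]
    apply Finset.sum_congr rfl
    intro i _
    apply Finset.sum_congr rfl
    intro k _
    ring
  have habs : ∀ i : Fin (h + 1), |A.mulVec (y i) r| ≤ 2 * n * Δ := by
    intro i
    calc |A.mulVec (y i) r| = |∑ k, A r k * y i k| := by rfl
      _ ≤ ∑ k, |A r k * y i k| := Finset.abs_sum_le_sum_abs _ _
      _ ≤ ∑ _k : Fin n, (Δ : ℤ) * 2 := by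
          apply Finset.sum_le_sum
          intro k _
          rw [abs_mul]
          have hy2 : |y i k| ≤ 2 := by
            rcases hy i k with ⟨h0, h1⟩
            rw [abs_of_nonneg h0]
            rcases hu i k with h2 | h2 | h2 <;> omega
          exact mul_le_mul (hA r k) hy2 (abs_nonneg _) (Int.ofNat_nonneg Δ)
      _ = 2 * n * Δ := by simp; ring
  constructor
  · -- congruence
    rw [hb, ← Finset.sum_filter_add_sum_filter_not Finset.univ
        (fun i : Fin (h + 1) => (i : ℕ) ≤ (j : ℕ))]
    have hdvd : (2 : ℤ) ^ ((j : ℕ) + 1) ∣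
        ∑ i ∈ Finset.univ.filter (fun i : Fin (h + 1) => ¬ (i : ℕ) ≤ (j : ℕ)),
          (2 : ℤ) ^ (i : ℕ) * A.mulVec (y i) r := by
      apply Finset.dvd_sum
      intro i hi
      simp only [Finset.mem_filter, not_le] at hi
      exact Dvd.dvd.mul_right (pow_dvd_pow 2 hi.2) _
    conv_lhs => rw [show (∑ i ∈ Finset.univ.filter (fun i : Fin (h + 1) => (i : ℕ) ≤ (j : ℕ)),
          (2 : ℤ) ^ (i : ℕ) * A.mulVec (y i) r) =
        (∑ i ∈ Finset.univ.filter (fun i : Fin (h + 1) => (i : ℕ) ≤ (j : ℕ)),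
          (2 : ℤ) ^ (i : ℕ) * A.mulVec (y i) r) + 0 from (add_zero _).symm]
    exact Int.ModEq.add_left _ ((Int.modEq_zero_iff_dvd.mpr hdvd).symm)
  · -- bound
    have hm : (1 : ℤ) ≤ m := by
      have : 0 < m := Fin.pos r
      exact_mod_cast this
    have hsum : (∑ i ∈ Finset.univ.filter (fun i : Fin (h + 1) => (i : ℕ) ≤ (j : ℕ)),
        (2 : ℤ) ^ (i : ℕ)) ≤ 2 ^ ((j : ℕ) + 1) := by
      have h1 : (∑ i ∈ Finset.univ.filter (fun i : Fin (h + 1) => (i : ℕ) ≤ (j : ℕ)),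
          (2 : ℤ) ^ (i : ℕ)) =
          ∑ i ∈ Finset.range (h + 1), (if i ≤ (j : ℕ) then (2 : ℤ) ^ i else 0) := by
        rw [Finset.sum_filter]
        exact Fin.sum_univ_eq_sum_range (fun i => if i ≤ (j : ℕ) then (2 : ℤ) ^ i else 0) (h + 1)
      have h2 : ∑ i ∈ Finset.range (h + 1), (if i ≤ (j : ℕ) then (2 : ℤ) ^ i else 0) =
          ∑ i ∈ Finset.range ((j : ℕ) + 1), (if i ≤ (j : ℕ) then (2 : ℤ) ^ i else 0) := by
        symm
        apply Finset.sum_subset (Finset.range_subset_range.mpr (by omega))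
        intro i _ hi
        simp only [Finset.mem_range, not_lt] at hi
        rw [if_neg (by omega)]
      have h3 : ∑ i ∈ Finset.range ((j : ℕ) + 1), (if i ≤ (j : ℕ) then (2 : ℤ) ^ i else 0) =
          ∑ i ∈ Finset.range ((j : ℕ) + 1), (2 : ℤ) ^ i := by
        apply Finset.sum_congr rfl
        intro i hi
        rw [if_pos (by simp at hi; omega)]
      rw [h1, h2, h3]
      exact geom_two_le _
    calc |∑ i ∈ Finset.univ.filter (fun i : Fin (h + 1) => (i : ℕ) ≤ (j : ℕ)),
          (2 : ℤ) ^ (i : ℕ) * A.mulVec (y i) r|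
        ≤ ∑ i ∈ Finset.univ.filter (fun i : Fin (h + 1) => (i : ℕ) ≤ (j : ℕ)),
            |(2 : ℤ) ^ (i : ℕ) * A.mulVec (y i) r| := Finset.abs_sum_le_sum_abs _ _
      _ ≤ ∑ i ∈ Finset.univ.filter (fun i : Fin (h + 1) => (i : ℕ) ≤ (j : ℕ)),
            (2 : ℤ) ^ (i : ℕ) * (2 * n * Δ) := by
          apply Finset.sum_le_sum
          intro i _
          rw [abs_mul, abs_pow, abs_two]
          exact mul_le_mul_of_nonneg_left (habs i) (by positivity)
      _ = (∑ i ∈ Finset.univ.filter (fun i : Fin (h + 1) => (i : ℕ) ≤ (j : ℕ)),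
            (2 : ℤ) ^ (i : ℕ)) * (2 * n * Δ) := by rw [← Finset.sum_mul]
      _ ≤ (2 ^ ((j : ℕ) + 1)) * (2 * n * Δ) :=
          mul_le_mul_of_nonneg_right hsum (by positivity)
      _ = (2 ^ ((j : ℕ) + 1) * 2 * n * Δ) * 1 := by ring
      _ ≤ (2 ^ ((j : ℕ) + 1) * 2 * n * Δ) * m :=
          mul_le_mul_of_nonneg_left hm (by positivity)
      _ = 2 ^ ((j : ℕ) + 2) * m * n * Δ := by ring
end

section
/- For m ≥ 3, let B ∈ ℤ^{m×m} be the matrix whose first row is (1, 0, …, 0, 1), whose second row is all zeros, and whose rows 3 through m form the pattern of 2 on the subdiagonal positions: row i+2 (for i = 1,…,m−2) has entry 2 in column i, entry −1 in column i+1, and zeros elsewhere. Then the system Bx = (1,0,…,0)ᵀ with x ∈ ℤ₋≥0^m has exactly two solutions: x = (0,…,0,1)ᵀ and x = (1, 2, 4, …, 2^{m−2}, 0)ᵀ. -/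
/-- The n-fold gadget matrix: for `m ≥ 3`, the matrix `B` with first row
`(1,0,…,0,1)`, second row zero, and row `i+2` having `2` in column `i` and
`−1` in column `i+1`, admits exactly two nonnegative integer solutions of
`Bx = e₁`: the last unit vector and `(1,2,4,…,2^{m-2},0)`. -/
theorem stmt_12 (m : ℕ) (hm : 3 ≤ m)
    (B : Matrix (Fin m) (Fin m) ℤ)
    (hB : ∀ i j : Fin m, B i j =
      if (i : ℕ) = 0 then (if (j : ℕ) = 0 ∨ (j : ℕ) = m - 1 then 1 else 0)
      else if (i : ℕ) = 1 then 0
      else if (j : ℕ) = (i : ℕ) - 2 then 2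
      else if (j : ℕ) = (i : ℕ) - 1 then -1
      else 0) :
    {x : Fin m → ℤ | (∀ i, 0 ≤ x i) ∧
        B.mulVec x = (fun i : Fin m => if (i : ℕ) = 0 then (1:ℤ) else 0)} =
      {(fun i : Fin m => if (i : ℕ) = m - 1 then (1:ℤ) else 0),
       (fun i : Fin m => if (i : ℕ) = m - 1 then (0:ℤ) else 2 ^ (i : ℕ))} := by
  have h0 : (0:ℕ) < m := by omega
  have hm1 : m - 1 < m := by omega
  have key : ∀ (x : Fin m → ℤ) (i : Fin m), B.mulVec x i =
      if (i : ℕ) = 0 then x ⟨0, h0⟩ + x ⟨m - 1, hm1⟩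
      else if (i : ℕ) = 1 then 0
      else 2 * x ⟨(i : ℕ) - 2, by omega⟩ - x ⟨(i : ℕ) - 1, by omega⟩ := by
    intro x i
    by_cases hi0 : (i : ℕ) = 0
    · have h : ∀ j : Fin m, B i j * x j =
          (if j = ⟨0, h0⟩ then x j else 0) + (if j = ⟨m-1, hm1⟩ then x j else 0) := by
        intro j
        rw [hB]
        by_cases hj0 : (j : ℕ) = 0 <;> by_cases hj1 : (j : ℕ) = m - 1 <;>
          simp [hi0, hj0, hj1, Fin.ext_iff] <;> omega
      simp only [Matrix.mulVec, dotProduct, h, Finset.sum_add_distrib,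
        Finset.sum_ite_eq', Finset.mem_univ, if_true, hi0]
    · by_cases hi1 : (i : ℕ) = 1
      · have h : ∀ j : Fin m, B i j * x j = 0 := by
          intro j; rw [hB]; simp [hi0, hi1]
        simp [Matrix.mulVec, dotProduct, h, hi0, hi1]
      · have hilt := i.isLt
        have h : ∀ j : Fin m, B i j * x j =
            (if j = ⟨(i:ℕ)-2, by omega⟩ then 2 * x j else 0) +
            (if j = ⟨(i:ℕ)-1, by omega⟩ then -x j else 0) := by
          intro j
          rw [hB]
          by_cases hj0 : (j : ℕ) = (i:ℕ) - 2 <;> by_cases hj1 : (j : ℕ) = (i:ℕ) - 1 <;>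
            simp [hi0, hi1, hj0, hj1, Fin.ext_iff] <;> omega
        simp only [Matrix.mulVec, dotProduct, h, Finset.sum_add_distrib,
          Finset.sum_ite_eq', Finset.mem_univ, if_true, hi0, hi1, if_false]
        ring
  ext x
  simp only [Set.mem_setOf_eq, Set.mem_insert_iff, Set.mem_singleton_iff]
  constructor
  · rintro ⟨hx, hBx⟩
    have row : ∀ i : Fin m, B.mulVec x i = if (i : ℕ) = 0 then 1 else 0 := by
      intro i; rw [hBx]
    -- row 0
    have e0 : x ⟨0, h0⟩ + x ⟨m - 1, hm1⟩ = 1 := by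
      have := (key x ⟨0, h0⟩).symm.trans (row ⟨0, h0⟩)
      simpa using this
    -- recurrence
    have hrec : ∀ (k : ℕ) (hk : k + 2 < m), x ⟨k + 1, by omega⟩ = 2 * x ⟨k, by omega⟩ := by
      intro k hk
      have := (key x ⟨k + 2, hk⟩).symm.trans (row ⟨k + 2, hk⟩)
      simp only [show (((⟨k+2, hk⟩ : Fin m) : ℕ)) = k + 2 from rfl] at this
      have h2 : ¬ (k + 2 = 0) := by omega
      have h3 : ¬ (k + 2 = 1) := by omega
      simp only [if_neg h2, if_neg h3, Nat.add_sub_cancel,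
        show k + 2 - 1 = k + 1 by omega] at this
      linarith
    have pow : ∀ (k : ℕ) (hk : k < m - 1), x ⟨k, by omega⟩ = 2 ^ k * x ⟨0, h0⟩ := by
      intro k
      induction k with
      | zero => intro _; simp
      | succ n ih =>
        intro hk
        rw [hrec n (by omega), ih (by omega)]
        ring
    have hx0 := hx ⟨0, h0⟩
    have hxl := hx ⟨m - 1, hm1⟩
    have hcase : x ⟨0, h0⟩ = 0 ∧ x ⟨m-1, hm1⟩ = 1 ∨ x ⟨0, h0⟩ = 1 ∧ x ⟨m-1, hm1⟩ = 0 := by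
      omega
    rcases hcase with ⟨ha, hb⟩ | ⟨ha, hb⟩
    · left
      funext i
      by_cases hi : (i : ℕ) = m - 1
      · rw [if_pos hi, show i = ⟨m-1, hm1⟩ from Fin.ext hi, hb]
      · rw [if_neg hi]
        have := pow (i : ℕ) (by have := i.isLt; omega)
        rw [Fin.eta] at this
        rw [this, ha]; ring
    · right
      funext i
      by_cases hi : (i : ℕ) = m - 1
      · rw [if_pos hi, show i = ⟨m-1, hm1⟩ from Fin.ext hi, hb]
      · rw [if_neg hi]
        have := pow (i : ℕ) (by have := i.isLt; omega)
        rw [Fin.eta] at this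
        rw [this, ha]; ring
  · intro hx
    rcases hx with hx | hx <;> subst hx
    · constructor
      · intro i; dsimp only; split <;> norm_num
      · funext i
        rw [key]
        by_cases hi0 : (i : ℕ) = 0
        · simp [hi0, show ¬ ((0:ℕ) = m - 1) by omega]
        · by_cases hi1 : (i : ℕ) = 1
          · simp [hi0, hi1]
          · have hilt := i.isLt
            simp only [hi0, hi1, if_false]
            rw [if_neg (by omega : ¬ ((i:ℕ) - 2 = m - 1)),
              if_neg (by omega : ¬ ((i:ℕ) - 1 = m - 1))]
            ring
    · constructor
      · intro i; dsimp only; split <;> positivity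
      · funext i
        rw [key]
        by_cases hi0 : (i : ℕ) = 0
        · simp [hi0, show ¬ ((0:ℕ) = m - 1) by omega]
        · by_cases hi1 : (i : ℕ) = 1
          · simp [hi0, hi1]
          · have hilt := i.isLt
            simp only [hi0, hi1, if_false]
            rw [if_neg (by omega : ¬ ((i:ℕ) - 2 = m - 1)),
              if_neg (by omega : ¬ ((i:ℕ) - 1 = m - 1))]
            have : (2:ℤ) * 2 ^ ((i:ℕ) - 2) = 2 ^ ((i:ℕ) - 1) := by
              rw [← pow_succ']
              congr 1
              omega
            rw [this]; ring
end
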